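/- For n exchangeable, integrable random variables, the expectation of the k-th order statistic is the linear combination E[X_{(n,k)}] = Σ_{i=k}^{n} W^{n,k}_i · E[max(X_1,...,X_i)], where W^{n,k}_i = Σ_{j=k}^{i} C(n, j) · A^{n,j}_i with A as defined by its recurrence. -/

import Mathlib

open MeasureTheory Finset

/-- Coefficients `A^{n,k}_i` defined by `A^{n,k}_k = 1` and
`A^{n,k}_i = -∑_{j=1}^{i-k} C(n-i+j, j) · A^{n,k}_{i-j}` for `i > k`. -/
def Acoef (n k : ℕ) : ℕ → ℤ
  | i =>
    if i ≤ k then (if i = k then 1 else 0)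
    else -∑ j ∈ (Finset.Icc 1 (i - k)).attach,
        ((n - i + j.1).choose j.1 : ℤ) * Acoef n k (i - j.1)
  termination_by i => i
  decreasing_by
    have hj := j.2
    simp only [Finset.mem_Icc] at hj
    omega

/-- The `W` coefficients: `W^{n,k}_i = ∑_{j=k}^{i} C(n,j) · A^{n,j}_i`. -/
def Wcoef (n k i : ℕ) : ℤ := ∑ j ∈ Finset.Icc k i, (n.choose j : ℤ) * Acoef n j i

/-- `X 0, ..., X (n-1)` are exchangeable (jointly-identical) random variables:
the joint distribution is invariant under any permutation of the indices. -/
def Exchangeable {Ω : Type*} [MeasurableSpace Ω] (μ : MeasureTheory.Measure Ω) {n : ℕ}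
    (X : Fin n → Ω → ℝ) : Prop :=
  ∀ σ : Equiv.Perm (Fin n),
    μ.map (fun ω => fun i => X (σ i) ω) = μ.map (fun ω => fun i => X i ω)

open scoped Classical in
/-- The `k`-th smallest value among `v 0, ..., v (n-1)` (the `k`-th order statistic). -/
noncomputable def orderStat {n : ℕ} (k : ℕ) (v : Fin n → ℝ) : ℝ :=
  sInf {t : ℝ | k ≤ (Finset.univ.filter fun i : Fin n => v i ≤ t).card}

/-- The maximum of the first `i` values `v 0, ..., v (i-1)` (for `1 ≤ i ≤ n`). -/
noncomputable def maxFirst {n : ℕ} (i : ℕ) (v : Fin n → ℝ) : ℝ :=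
  sSup (v '' {j : Fin n | (j : ℕ) < i})



section Helpers

lemma L1 (M : ℕ) : ∀ d : ℕ, ∑ b ∈ range (d+1), (-1:ℤ)^b * ((M+1).choose b : ℤ) = (-1)^d * (M.choose d : ℤ) := by
  intro d
  induction d with
  | zero => simp
  | succ d ih =>
    rw [Finset.sum_range_succ, ih, Nat.choose_succ_succ' M d]
    push_cast
    ring

lemma L2 (m d : ℕ) (h1 : 1 ≤ d) (h2 : d ≤ m) :
    ∑ l ∈ range (d+1), (-1:ℤ)^l * (m.choose l : ℤ) * ((m-l).choose (d-l) : ℤ) = 0 := by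
  have key : ∀ l ∈ range (d+1), (-1:ℤ)^l * (m.choose l : ℤ) * ((m-l).choose (d-l) : ℤ)
      = (m.choose d : ℤ) * ((-1:ℤ)^l * (d.choose l : ℤ)) := by
    intro l hl
    rw [Finset.mem_range] at hl
    have hld : l ≤ d := by omega
    have := Nat.choose_mul (n := m) hld
    have : (m.choose d : ℤ) * (d.choose l : ℤ) = (m.choose l : ℤ) * ((m-l).choose (d-l) : ℤ) := by
      exact_mod_cast congrArg (Nat.cast : ℕ → ℤ) this
    rw [mul_assoc, ← this]; ring
  rw [Finset.sum_congr rfl key, ← Finset.mul_sum, Int.alternating_sum_range_choose, if_neg (by omega)]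
  ring

lemma Acoef_eq (n k : ℕ) : ∀ i, k ≤ i → i ≤ n → Acoef n k i = (-1:ℤ)^(i-k) * ((n-k).choose (i-k) : ℤ) := by
  intro i
  induction i using Nat.strong_induction_on with
  | _ i ih =>
    intro hki hin
    rcases eq_or_lt_of_le hki with h | h
    · subst h; rw [Acoef]; simp
    · rw [Acoef, if_neg (by omega), Finset.sum_attach (Icc 1 (i-k)) (fun j => ((n - i + j).choose j : ℤ) * Acoef n k (i - j))]
      have hrec : ∀ j ∈ Icc 1 (i-k), ((n - i + j).choose j : ℤ) * Acoef n k (i - j)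
          = (-1:ℤ)^(i-j-k) * ((n-k).choose (i-j-k) : ℤ) * ((n - i + j).choose j : ℤ) := by
        intro j hj
        rw [Finset.mem_Icc] at hj
        rw [ih (i-j) (by omega) (by omega) (by omega)]
        ring
      rw [Finset.sum_congr rfl hrec]
      set d := i - k with hd
      set m := n - k with hm
      have hd1 : 1 ≤ d := by omega
      have hdm : d ≤ m := by omega
      have hre : ∑ j ∈ Icc 1 d, (-1:ℤ)^(i-j-k) * ((n-k).choose (i-j-k) : ℤ) * ((n - i + j).choose j : ℤ)
          = ∑ l ∈ range d, (-1:ℤ)^l * (m.choose l : ℤ) * ((m-l).choose (d-l) : ℤ) := by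
        apply Finset.sum_nbij' (fun j => d - j) (fun l => d - l)
        · intro j hj; rw [Finset.mem_Icc] at hj; rw [Finset.mem_range]; omega
        · intro l hl; rw [Finset.mem_range] at hl; rw [Finset.mem_Icc]; omega
        · intro j hj; rw [Finset.mem_Icc] at hj; omega
        · intro l hl; rw [Finset.mem_range] at hl; omega
        · intro j hj; rw [Finset.mem_Icc] at hj
          have h1 : i - j - k = d - j := by omega
          have h2 : n - i + j = m - (d - j) := by omega
          have h4 : d - (d - j) = j := by omega
          rw [h1, h2, h4]
      rw [hre]
      have := L2 m d hd1 hdm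
      rw [Finset.sum_range_succ] at this
      have h0 : (m - d).choose (d-d) = 1 := by simp
      rw [h0] at this
      push_cast at this
      have : ∑ l ∈ range d, (-1:ℤ)^l * (m.choose l : ℤ) * ((m-l).choose (d-l) : ℤ) = -((-1)^d * (m.choose d : ℤ)) := by linarith
      rw [this]; ring

lemma Wcoef_eq (n k i : ℕ) (hk : 1 ≤ k) (hki : k ≤ i) (hin : i ≤ n) :
    Wcoef n k i = (-1:ℤ)^(i-k) * ((i-1).choose (k-1) : ℤ) * (n.choose i : ℤ) := by
  unfold Wcoef
  have step : ∀ j ∈ Icc k i, (n.choose j : ℤ) * Acoef n j i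
      = (n.choose i : ℤ) * ((-1:ℤ)^(i-j) * (i.choose (i-j) : ℤ)) := by
    intro j hj
    rw [Finset.mem_Icc] at hj
    rw [Acoef_eq n j i hj.2 hin]
    have h := Nat.choose_mul (n := n) hj.2
    have hsym : i.choose (i - j) = i.choose j := Nat.choose_symm hj.2
    have hcast : (n.choose i : ℤ) * (i.choose j : ℤ) = (n.choose j : ℤ) * ((n-j).choose (i-j) : ℤ) := by
      exact_mod_cast congrArg (Nat.cast : ℕ → ℤ) h
    rw [hsym, mul_comm ((-1:ℤ)^(i-j)), ← mul_assoc, ← hcast]; ring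
  rw [Finset.sum_congr rfl step, ← Finset.mul_sum]
  have hre : ∑ j ∈ Icc k i, (-1:ℤ)^(i-j) * (i.choose (i-j) : ℤ)
      = ∑ b ∈ range (i-k+1), (-1:ℤ)^b * (i.choose b : ℤ) := by
    apply Finset.sum_nbij' (fun j => i - j) (fun b => i - b)
    · intro j hj; rw [Finset.mem_Icc] at hj; rw [Finset.mem_range]; omega
    · intro b hb; rw [Finset.mem_range] at hb; rw [Finset.mem_Icc]; omega
    · intro j hj; rw [Finset.mem_Icc] at hj; omega
    · intro b hb; rw [Finset.mem_range] at hb; omega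
    · intro j hj; rfl
  rw [hre]
  obtain ⟨M, hM⟩ : ∃ M, i = M + 1 := ⟨i - 1, by omega⟩
  subst hM
  rw [L1 M (M+1-k)]
  have : M.choose (M + 1 - k) = (M+1-1).choose (k-1) := by
    simp only [Nat.add_sub_cancel]
    rw [show M + 1 - k = M - (k-1) by omega, Nat.choose_symm (by omega)]
  rw [this]; ring

lemma L3 (n k m0 : ℕ) (hk : 1 ≤ k) (hkn : k ≤ n) (hm : m0 < n) :
    ∑ i ∈ Icc k n, (-1:ℤ)^(i-k) * ((i-1).choose (k-1) : ℤ) * (m0.choose (i-1) : ℤ)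
      = if m0 = k - 1 then 1 else 0 := by
  rcases lt_or_ge m0 (k-1) with h | h
  · rw [if_neg (by omega)]
    apply Finset.sum_eq_zero
    intro i hi
    rw [Finset.mem_Icc] at hi
    rw [Nat.choose_eq_zero_of_lt (show m0 < i - 1 by omega)]
    simp
  · have step : ∀ i ∈ Icc k n, (-1:ℤ)^(i-k) * ((i-1).choose (k-1) : ℤ) * (m0.choose (i-1) : ℤ)
        = (m0.choose (k-1) : ℤ) * ((-1:ℤ)^(i-k) * ((m0-(k-1)).choose (i-k) : ℤ)) := by
      intro i hi
      rw [Finset.mem_Icc] at hi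
      rcases le_or_gt (i-1) m0 with h2 | h2
      · have hmul := Nat.choose_mul (n := m0) (show k-1 ≤ i-1 by omega)
        have hc : (m0.choose (i-1) : ℤ) * ((i-1).choose (k-1) : ℤ)
            = (m0.choose (k-1) : ℤ) * ((m0-(k-1)).choose ((i-1)-(k-1)) : ℤ) := by
          exact_mod_cast congrArg (Nat.cast : ℕ → ℤ) hmul
        rw [show (i-1)-(k-1) = i - k by omega] at hc
        rw [mul_assoc, mul_comm ((i-1).choose (k-1) : ℤ), hc]; ring
      · rw [Nat.choose_eq_zero_of_lt h2, Nat.choose_eq_zero_of_lt (show m0 - (k-1) < i - k by omega)]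
        push_cast; ring
    rw [Finset.sum_congr rfl step, ← Finset.mul_sum]
    have hre : ∑ i ∈ Icc k n, (-1:ℤ)^(i-k) * ((m0-(k-1)).choose (i-k) : ℤ)
        = ∑ b ∈ range (n-k+1), (-1:ℤ)^b * ((m0-(k-1)).choose b : ℤ) := by
      apply Finset.sum_nbij' (fun i => i - k) (fun b => b + k)
      · intro i hi; rw [Finset.mem_Icc] at hi; rw [Finset.mem_range]; omega
      · intro b hb; rw [Finset.mem_range] at hb; rw [Finset.mem_Icc]; omega
      · intro i hi; rw [Finset.mem_Icc] at hi; omega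
      · intro b hb; rw [Finset.mem_range] at hb; omega
      · intro i hi; rfl
    rw [hre]
    rcases eq_or_lt_of_le h with h1 | h1
    · rw [if_pos (by omega), show m0 - (k-1) = 0 by omega, ← h1]
      rw [Finset.sum_eq_single 0]
      · simp
      · intro b hb hb0
        rw [Nat.choose_eq_zero_of_lt (by omega)]; ring
      · intro hb; simp at hb
    · rw [if_neg (by omega)]
      have hM : m0 - (k-1) = (m0 - k) + 1 := by omega
      rw [hM, L1 (m0-k) (n-k), Nat.choose_eq_zero_of_lt (show m0 - k < n - k by omega)]
      simp

open scoped Classical in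
lemma orderStat_mono {n k : ℕ} (hk1 : 1 ≤ k) (hkn : k ≤ n) (w : Fin n → ℝ) (hw : Monotone w) :
    orderStat k w = w ⟨k-1, by omega⟩ := by
  set m : Fin n := ⟨k-1, by omega⟩ with hm
  have lb : ∀ t ∈ {t : ℝ | k ≤ (Finset.univ.filter fun i : Fin n => w i ≤ t).card}, w m ≤ t := by
    intro t ht
    simp only [Set.mem_setOf_eq] at ht
    by_contra hlt
    push_neg at hlt
    have hsub : (Finset.univ.filter fun i : Fin n => w i ≤ t) ⊆ Finset.Iio m := by
      intro i hi
      rw [Finset.mem_filter] at hi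
      rw [Finset.mem_Iio]
      by_contra hge
      push_neg at hge
      exact absurd (le_trans (hw hge) hi.2) (not_le.mpr hlt)
    have := Finset.card_le_card hsub
    rw [Fin.card_Iio] at this
    have hmv : (m : ℕ) = k - 1 := rfl
    omega
  have mem : w m ∈ {t : ℝ | k ≤ (Finset.univ.filter fun i : Fin n => w i ≤ t).card} := by
    simp only [Set.mem_setOf_eq]
    have hsub : Finset.Iic m ⊆ (Finset.univ.filter fun i : Fin n => w i ≤ w m) := by
      intro i hi
      rw [Finset.mem_Iic] at hi
      rw [Finset.mem_filter]
      exact ⟨Finset.mem_univ _, hw hi⟩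
    have := Finset.card_le_card hsub
    rw [Fin.card_Iic] at this
    have hmv : (m : ℕ) = k - 1 := rfl
    omega
  rw [orderStat]
  exact le_antisymm (csInf_le ⟨w m, lb⟩ mem) (le_csInf ⟨w m, mem⟩ lb)

open scoped Classical in
lemma orderStat_perm {n k : ℕ} (v : Fin n → ℝ) (σ : Equiv.Perm (Fin n)) :
    orderStat k (v ∘ σ) = orderStat k v := by
  rw [orderStat, orderStat]
  congr 1
  ext t
  simp only [Set.mem_setOf_eq, Function.comp]
  have : (Finset.univ.filter fun i : Fin n => v (σ i) ≤ t).card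
      = (Finset.univ.filter fun i : Fin n => v i ≤ t).card := by
    apply Finset.card_bij (fun i _ => σ i)
    · intro i hi; rw [Finset.mem_filter] at hi ⊢; exact ⟨Finset.mem_univ _, hi.2⟩
    · intro a ha b hb hab; exact σ.injective hab
    · intro b hb
      rw [Finset.mem_filter] at hb
      exact ⟨σ.symm b, Finset.mem_filter.mpr ⟨Finset.mem_univ _, by simpa using hb.2⟩, by simp⟩
  rw [this]

open scoped Classical in
lemma count_max {n i : ℕ} (hi : 1 ≤ i) (m : Fin n) :
    ((Finset.powersetCard i (univ : Finset (Fin n))).filter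
      (fun S => m ∈ S ∧ S ⊆ Finset.Iic m)).card = ((m : ℕ)).choose (i-1) := by
  rw [← Fin.card_Iio (b := m), ← Finset.card_powersetCard]
  apply Finset.card_bij (fun S _ => S.erase m)
  · intro S hS
    rw [Finset.mem_filter, Finset.mem_powersetCard] at hS
    obtain ⟨⟨hsub, hcard⟩, hmem, hle⟩ := hS
    rw [Finset.mem_powersetCard]
    constructor
    · intro x hx
      rw [Finset.mem_erase] at hx
      rw [Finset.mem_Iio]
      exact lt_of_le_of_ne (Finset.mem_Iic.mp (hle hx.2)) hx.1
    · rw [Finset.card_erase_of_mem hmem, hcard]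
  · intro a ha b hb hab
    rw [Finset.mem_filter] at ha hb
    have : insert m (a.erase m) = insert m (b.erase m) := by rw [hab]
    rwa [Finset.insert_erase ha.2.1, Finset.insert_erase hb.2.1] at this
  · intro T hT
    rw [Finset.mem_powersetCard] at hT
    refine ⟨insert m T, ?_, ?_⟩
    · rw [Finset.mem_filter, Finset.mem_powersetCard]
      have hmT : m ∉ T := fun h => absurd (Finset.mem_Iio.mp (hT.1 h)) (lt_irrefl m)
      refine ⟨⟨Finset.subset_univ _, ?_⟩, Finset.mem_insert_self _ _, ?_⟩
      · rw [Finset.card_insert_of_notMem hmT, hT.2]; omega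
      · intro x hx
        rw [Finset.mem_insert] at hx
        rw [Finset.mem_Iic]
        rcases hx with h | h
        · exact le_of_eq h
        · exact le_of_lt (Finset.mem_Iio.mp (hT.1 h))
    · rw [Finset.erase_insert (fun h => absurd (Finset.mem_Iio.mp (hT.1 h)) (lt_irrefl m))]

lemma sSup_eq_max' {n : ℕ} (w : Fin n → ℝ) (S : Finset (Fin n)) (hS : S.Nonempty) (hw : Monotone w) :
    sSup (w '' ↑S) = w (S.max' hS) := by
  rw [← Finset.sup'_eq_csSup_image S hS w]
  apply le_antisymm
  · exact Finset.sup'_le _ _ (fun b hb => hw (Finset.le_max' S b hb))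
  · exact Finset.le_sup' w (S.max'_mem hS)

open scoped Classical in
lemma group_sum {n i : ℕ} (hi : 1 ≤ i) (hin : i ≤ n) (w : Fin n → ℝ) (hw : Monotone w) :
    ∑ S ∈ Finset.powersetCard i (univ : Finset (Fin n)), sSup (w '' ↑S)
      = ∑ m : Fin n, (((m : ℕ)).choose (i-1) : ℝ) * w m := by
  have hne : ∀ S ∈ Finset.powersetCard i (univ : Finset (Fin n)), S.Nonempty := by
    intro S hS
    rw [Finset.mem_powersetCard] at hS
    rw [← Finset.card_pos, hS.2]; omega
  have step : ∀ S ∈ Finset.powersetCard i (univ : Finset (Fin n)),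
      sSup (w '' ↑S) = ∑ m : Fin n, if m ∈ S ∧ S ⊆ Finset.Iic m then w m else 0 := by
    intro S hS
    have hSne := hne S hS
    rw [sSup_eq_max' w S hSne hw]
    rw [Finset.sum_eq_single_of_mem (S.max' hSne) (Finset.mem_univ _)]
    · rw [if_pos ⟨S.max'_mem hSne, fun x hx => Finset.mem_Iic.mpr (S.le_max' x hx)⟩]
    · intro b _ hb
      rw [if_neg]
      rintro ⟨hbS, hble⟩
      exact hb (le_antisymm (S.le_max' b hbS) (Finset.mem_Iic.mp (hble (S.max'_mem hSne))))
  rw [Finset.sum_congr rfl step, Finset.sum_comm]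
  apply Finset.sum_congr rfl
  intro m _
  rw [← Finset.sum_filter, Finset.sum_const, count_max hi m, nsmul_eq_mul]

lemma det_lemma {n k : ℕ} (hk1 : 1 ≤ k) (hkn : k ≤ n) (v : Fin n → ℝ) :
    orderStat k v = ∑ i ∈ Icc k n, ((-1:ℝ)^(i-k) * (((i-1).choose (k-1) : ℕ) : ℝ))
      * ∑ S ∈ Finset.powersetCard i (univ : Finset (Fin n)), sSup (v '' ↑S) := by
  set σ := Tuple.sort v with hσ
  set w := v ∘ σ with hwdef
  have hw : Monotone w := Tuple.monotone_sort v
  have h1 : orderStat k v = w ⟨k-1, by omega⟩ := by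
    rw [← orderStat_perm v σ, orderStat_mono hk1 hkn _ hw]
  have hre : ∀ i, ∑ S ∈ Finset.powersetCard i (univ : Finset (Fin n)), sSup (v '' ↑S)
      = ∑ S ∈ Finset.powersetCard i (univ : Finset (Fin n)), sSup (w '' ↑S) := by
    intro i
    apply Finset.sum_nbij' (fun S => S.image σ.symm) (fun T => T.image σ)
    · intro S hS
      rw [Finset.mem_powersetCard] at hS ⊢
      exact ⟨Finset.subset_univ _, by rw [Finset.card_image_of_injective _ σ.symm.injective, hS.2]⟩
    · intro T hT
      rw [Finset.mem_powersetCard] at hT ⊢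
      exact ⟨Finset.subset_univ _, by rw [Finset.card_image_of_injective _ σ.injective, hT.2]⟩
    · intro S _
      rw [Finset.image_image]
      simp
    · intro T _
      rw [Finset.image_image]
      simp
    · intro S _
      rw [Finset.coe_image, ← Set.image_comp]
      congr 1
      ext x
      simp [hwdef]
  have h2 : ∀ i ∈ Icc k n, ((-1:ℝ)^(i-k) * (((i-1).choose (k-1) : ℕ) : ℝ))
      * ∑ S ∈ Finset.powersetCard i (univ : Finset (Fin n)), sSup (v '' ↑S)
      = ∑ m : Fin n, ((-1:ℝ)^(i-k) * (((i-1).choose (k-1) : ℕ) : ℝ) * (((m:ℕ).choose (i-1) : ℕ) : ℝ)) * w m := by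
    intro i hi
    rw [Finset.mem_Icc] at hi
    rw [hre i, group_sum (by omega) hi.2 w hw, Finset.mul_sum]
    apply Finset.sum_congr rfl
    intro m _
    ring
  rw [Finset.sum_congr rfl h2, Finset.sum_comm, h1]
  have h3 : ∀ m : Fin n, ∑ i ∈ Icc k n,
      ((-1:ℝ)^(i-k) * (((i-1).choose (k-1) : ℕ) : ℝ) * (((m:ℕ).choose (i-1) : ℕ) : ℝ)) * w m
      = (if (m:ℕ) = k - 1 then (1:ℝ) else 0) * w m := by
    intro m
    rw [← Finset.sum_mul]
    congr 1
    have := congrArg (Int.cast : ℤ → ℝ) (L3 n k (m : ℕ) hk1 hkn m.isLt)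
    push_cast at this
    convert this using 2
  rw [Finset.sum_congr rfl (fun m _ => h3 m)]
  rw [Finset.sum_eq_single_of_mem (⟨k-1, by omega⟩ : Fin n) (Finset.mem_univ _)]
  · rw [if_pos rfl, one_mul]
  · intro b _ hb
    rw [if_neg, zero_mul]
    intro hbv
    exact hb (Fin.ext hbv)

lemma measurable_sup'_fn {n : ℕ} (T : Finset (Fin n)) (hT : T.Nonempty) :
    Measurable (fun u : Fin n → ℝ => T.sup' hT u) := by
  induction hT using Finset.Nonempty.cons_induction with
  | singleton a =>
    have : (fun u : Fin n → ℝ => Finset.sup' {a} (Finset.singleton_nonempty a) u)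
        = fun u => u a := by
      ext u; simp
    rw [this]
    exact measurable_pi_apply a
  | cons a s h hs ih =>
    have : (fun u : Fin n → ℝ => Finset.sup' (Finset.cons a s h) (Finset.cons_nonempty h) u)
        = fun u => u a ⊔ Finset.sup' s hs u := by
      ext u; exact Finset.sup'_cons hs u
    rw [this]
    exact (measurable_pi_apply a).sup ih

lemma integrable_sup'_fn {Ω : Type*} [MeasurableSpace Ω] {μ : Measure Ω} {n : ℕ}
    (X : Fin n → Ω → ℝ) (hint : ∀ i, Integrable (X i) μ)
    (S : Finset (Fin n)) (hS : S.Nonempty) :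
    Integrable (fun ω => S.sup' hS (fun j => X j ω)) μ := by
  induction hS using Finset.Nonempty.cons_induction with
  | singleton a =>
    have : (fun ω => Finset.sup' {a} (Finset.singleton_nonempty a) (fun j => X j ω))
        = X a := by
      ext ω; simp
    rw [this]
    exact hint a
  | cons a s h hs ih =>
    have : (fun ω => Finset.sup' (Finset.cons a s h) (Finset.cons_nonempty h) (fun j => X j ω))
        = fun ω => X a ω ⊔ Finset.sup' s hs (fun j => X j ω) := by
      ext ω; exact Finset.sup'_cons hs _
    rw [this]
    exact (hint a).sup ih

lemma exch_integral {Ω : Type*} [MeasurableSpace Ω] {μ : Measure Ω} {n : ℕ}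
    (X : Fin n → Ω → ℝ) (hmeas : ∀ i, Measurable (X i))
    (hexch : Exchangeable μ X) {i : ℕ} (hi : 1 ≤ i) (hin : i ≤ n)
    (S : Finset (Fin n)) (hcard : S.card = i) :
    ∫ ω, sSup ((fun j => X j ω) '' ↑S) ∂μ = ∫ ω, maxFirst i (fun j => X j ω) ∂μ := by
  classical
  set T : Finset (Fin n) := Finset.univ.filter (fun j : Fin n => (j : ℕ) < i) with hTdef
  have hTcoe : (↑T : Set (Fin n)) = {j : Fin n | (j : ℕ) < i} := by
    ext x; simp [hTdef]
  have hTcard : T.card = i := by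
    have : T.card = (Finset.range i).card := by
      apply Finset.card_bij (fun (j : Fin n) _ => (j : ℕ))
      · intro j hj
        rw [hTdef, Finset.mem_filter] at hj
        rw [Finset.mem_range]; exact hj.2
      · intro a ha b hb hab; exact Fin.ext hab
      · intro b hb
        rw [Finset.mem_range] at hb
        exact ⟨⟨b, by omega⟩, by rw [hTdef, Finset.mem_filter]; exact ⟨Finset.mem_univ _, hb⟩, rfl⟩
    rw [this, Finset.card_range]
  have hTne : T.Nonempty := by
    rw [← Finset.card_pos, hTcard]; omega
  have hSne : S.Nonempty := by
    rw [← Finset.card_pos, hcard]; omega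
  have hc1 : Fintype.card ↑T = Fintype.card ↑S := by
    rw [Fintype.card_coe, Fintype.card_coe, hTcard, hcard]
  have e1 : ↑T ≃ ↑S := Fintype.equivOfCardEq hc1
  have e2 : {x : Fin n // ¬ x ∈ T} ≃ {x : Fin n // ¬ x ∈ S} := by
    apply Fintype.equivOfCardEq
    rw [Fintype.card_subtype_compl, Fintype.card_subtype_compl]
    rw [Fintype.card_coe, Fintype.card_coe, hTcard, hcard]
  set σ : Equiv.Perm (Fin n) :=
    ((Equiv.sumCompl (· ∈ T)).symm.trans ((e1.sumCongr e2).trans (Equiv.sumCompl (· ∈ S))))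
    with hσdef
  have hσT : ∀ x ∈ T, σ x ∈ S := by
    intro x hx
    simp only [hσdef, Equiv.trans_apply]
    rw [Equiv.sumCompl_symm_apply_of_pos hx]
    simp only [Equiv.sumCongr_apply, Sum.map_inl, Equiv.sumCompl_apply_inl]
    exact (e1 ⟨x, hx⟩).2
  have himg : T.image σ = S := by
    apply Finset.eq_of_subset_of_card_le
    · intro y hy
      rw [Finset.mem_image] at hy
      obtain ⟨x, hx, rfl⟩ := hy
      exact hσT x hx
    · rw [Finset.card_image_of_injective _ σ.injective, hTcard, hcard]
  set F : (Fin n → ℝ) → ℝ := fun u => T.sup' hTne u with hFdef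
  have hFmeas : Measurable F := measurable_sup'_fn T hTne
  have hvec : Measurable (fun ω => fun j => X j ω) :=
    measurable_pi_lambda _ (fun j => hmeas j)
  have hvecσ : Measurable (fun ω => fun j => X (σ j) ω) :=
    measurable_pi_lambda _ (fun j => hmeas (σ j))
  have key : ∫ ω, F (fun j => X j ω) ∂μ = ∫ ω, F (fun j => X (σ j) ω) ∂μ := by
    rw [← integral_map hvec.aemeasurable hFmeas.aestronglyMeasurable,
      ← integral_map hvecσ.aemeasurable ?_, hexch σ]
    rw [hexch σ]
    exact hFmeas.aestronglyMeasurable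
  have hmf : ∀ ω, maxFirst i (fun j => X j ω) = F (fun j => X j ω) := by
    intro ω
    rw [maxFirst, ← hTcoe, hFdef]
    exact (Finset.sup'_eq_csSup_image T hTne _).symm
  have hms : ∀ ω, sSup ((fun j => X j ω) '' ↑S) = F (fun j => X (σ j) ω) := by
    intro ω
    rw [← himg, Finset.coe_image, Set.image_image, hFdef]
    exact (Finset.sup'_eq_csSup_image T hTne _).symm
  simp only [hms, hmf]
  exact key.symm

end Helpers

/-- Linear transformation of expectations: for `n` exchangeable integrable random variables,
`E[X_{(n,k)}] = ∑_{i=k}^{n} W^{n,k}_i · E[max(X_1, ..., X_i)]`. -/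
theorem expectation_orderStat_eq_linear_comb {Ω : Type*} [MeasurableSpace Ω] (μ : Measure Ω)
    [IsProbabilityMeasure μ] {n : ℕ} (X : Fin n → Ω → ℝ) (hmeas : ∀ i, Measurable (X i))
    (hint : ∀ i, Integrable (X i) μ) (hexch : Exchangeable μ X)
    (k : ℕ) (hk : 1 ≤ k) (hkn : k ≤ n) :
    ∫ ω, orderStat k (fun i => X i ω) ∂μ =
      ∑ i ∈ Finset.Icc k n, (Wcoef n k i : ℝ) * ∫ ω, maxFirst i (fun j => X j ω) ∂μ := by
  classical
  have hIntS : ∀ S : Finset (Fin n), S.Nonempty →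
      Integrable (fun ω => sSup ((fun j => X j ω) '' ↑S)) μ := by
    intro S hS
    have heq : (fun ω => sSup ((fun j => X j ω) '' ↑S))
        = fun ω => S.sup' hS (fun j => X j ω) := by
      ext ω
      exact (Finset.sup'_eq_csSup_image S hS _).symm
    rw [heq]
    exact integrable_sup'_fn X hint S hS
  have hne : ∀ i ∈ Icc k n, ∀ S ∈ Finset.powersetCard i (univ : Finset (Fin n)), S.Nonempty := by
    intro i hi S hS
    rw [Finset.mem_Icc] at hi
    rw [Finset.mem_powersetCard] at hS
    rw [← Finset.card_pos, hS.2]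
    omega
  have hpt : (fun ω => orderStat k (fun i => X i ω))
      = fun ω => ∑ i ∈ Icc k n, ((-1:ℝ)^(i-k) * (((i-1).choose (k-1) : ℕ) : ℝ))
        * ∑ S ∈ Finset.powersetCard i (univ : Finset (Fin n)), sSup ((fun j => X j ω) '' ↑S) := by
    ext ω
    exact det_lemma hk hkn _
  rw [hpt, integral_finset_sum]
  · apply Finset.sum_congr rfl
    intro i hi
    have hi' := Finset.mem_Icc.mp hi
    rw [integral_const_mul, integral_finset_sum]
    · have hterm : ∀ S ∈ Finset.powersetCard i (univ : Finset (Fin n)),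
          ∫ ω, sSup ((fun j => X j ω) '' ↑S) ∂μ = ∫ ω, maxFirst i (fun j => X j ω) ∂μ := by
        intro S hS
        rw [Finset.mem_powersetCard] at hS
        exact exch_integral X hmeas hexch (by omega) hi'.2 S hS.2
      rw [Finset.sum_congr rfl hterm, Finset.sum_const, Finset.card_powersetCard,
        Finset.card_univ, Fintype.card_fin, nsmul_eq_mul]
      have hW : (Wcoef n k i : ℝ) = (-1:ℝ)^(i-k) * (((i-1).choose (k-1) : ℕ) : ℝ) * ((n.choose i : ℕ) : ℝ) := by
        have := congrArg (Int.cast : ℤ → ℝ) (Wcoef_eq n k i hk hi'.1 hi'.2)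
        push_cast at this
        exact_mod_cast this
      rw [hW]
      ring
    · intro S hS
      exact hIntS S (hne i hi S hS)
  · intro i hi
    apply Integrable.const_mul
    apply integrable_finset_sum
    intro S hS
    exact hIntS S (hne i hi S hS)
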